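/- arXiv:0804.3160 — 7 statements merged into one kernel-verified Lean document; each statement's English description precedes it below -/
import Mathlib

section
/- Let ε ≥ 0 and let z ∈ ℕ be maximal with z² ≤ (1+ε)(z+1). Suppose nonnegative-integer-valued functions n, m on a finite set E satisfy Σ_e n(e)² ≤ (1+ε)·Σ_e m(e)·(n(e)+1). Then Σ_e n(e)² ≤ (1+ε)·((z²+3z+1)/(2z−ε))·Σ_e m(e)². -/
lemma aux_pointwise (n m z : ℤ) (hn : 0 ≤ n) (hm : 0 ≤ m) (hz : 0 ≤ z) :
    (2*z+1)*m*(n+1) ≤ n^2 + (z^2+3*z+1)*m^2 := by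
  rcases lt_or_ge m 2 with hm2 | hm2
  · interval_cases m
    · nlinarith
    · rcases le_or_gt n z with h | h
      · nlinarith
      · nlinarith
  · nlinarith [sq_nonneg (2*n - (2*z+1)*m), mul_nonneg hz (sub_nonneg.mpr hm2)]

theorem stmt_5 {E : Type*} [Fintype E] (ε : ℝ) (hε : 0 ≤ ε) (z : ℕ)
    (hz : (z : ℝ) ^ 2 ≤ (1 + ε) * (z + 1))
    (hmax : ∀ w : ℕ, (w : ℝ) ^ 2 ≤ (1 + ε) * (w + 1) → w ≤ z)
    (n m : E → ℕ)
    (h : ∑ e : E, ((n e : ℝ)) ^ 2 ≤ (1 + ε) * ∑ e : E, (m e : ℝ) * (n e + 1)) :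
    ∑ e : E, ((n e : ℝ)) ^ 2 ≤
      (1 + ε) * ((z ^ 2 + 3 * z + 1) / (2 * z - ε)) * ∑ e : E, ((m e : ℝ)) ^ 2 := by
  -- z ≥ 1
  have hz1 : 1 ≤ z := hmax 1 (by push_cast; nlinarith)
  -- z+1 violates the inequality
  have hviol : (1 + ε) * ((z:ℝ) + 1 + 1) < ((z:ℝ) + 1) ^ 2 := by
    by_contra hc
    push_neg at hc
    have := hmax (z + 1) (by push_cast; linarith)
    omega
  have hzR : (1:ℝ) ≤ (z:ℝ) := by exact_mod_cast hz1
  have hden : 0 < 2 * (z:ℝ) - ε := by nlinarith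
  set A := ∑ e : E, ((n e : ℝ)) ^ 2 with hA
  set B := ∑ e : E, ((m e : ℝ)) ^ 2 with hB
  set C := ∑ e : E, (m e : ℝ) * (n e + 1) with hC
  have hAnn : 0 ≤ A := Finset.sum_nonneg fun e _ => sq_nonneg _
  have hkey : (2 * (z:ℝ) + 1) * C ≤ A + ((z:ℝ)^2 + 3*z + 1) * B := by
    have : ∀ e : E, (2 * (z:ℝ) + 1) * ((m e : ℝ) * (n e + 1)) ≤
        ((n e : ℝ))^2 + ((z:ℝ)^2 + 3*z + 1) * ((m e : ℝ))^2 := by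
      intro e
      have := aux_pointwise (n e) (m e) z (Int.ofNat_nonneg _) (Int.ofNat_nonneg _)
        (Int.ofNat_nonneg _)
      have h2 : ((2*(z:ℤ)+1)*(m e)*((n e)+1) : ℝ) ≤
          (((n e : ℤ))^2 + ((z:ℤ)^2+3*z+1)*((m e : ℤ))^2 : ℝ) := by exact_mod_cast this
      push_cast at h2
      linarith
    calc (2 * (z:ℝ) + 1) * C = ∑ e : E, (2 * (z:ℝ) + 1) * ((m e : ℝ) * (n e + 1)) := by
          rw [hC, Finset.mul_sum]
      _ ≤ ∑ e : E, (((n e : ℝ))^2 + ((z:ℝ)^2 + 3*z + 1) * ((m e : ℝ))^2) :=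
          Finset.sum_le_sum fun e _ => this e
      _ = A + ((z:ℝ)^2 + 3*z + 1) * B := by
          rw [Finset.sum_add_distrib, ← Finset.mul_sum]
  -- combine: (2z - ε) A ≤ (1+ε)(z²+3z+1) B
  have hmain : (2 * (z:ℝ) - ε) * A ≤ (1 + ε) * ((z:ℝ)^2 + 3*z + 1) * B := by
    nlinarith [h, hkey]
  have hgoal : A ≤ ((1 + ε) * ((z:ℝ)^2 + 3*z + 1) * B) / (2 * (z:ℝ) - ε) :=
    (le_div_iff₀ hden).mpr (by linarith)
  calc A ≤ ((1 + ε) * ((z:ℝ)^2 + 3*z + 1) * B) / (2 * (z:ℝ) - ε) := hgoal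
    _ = (1 + ε) * (((z:ℝ) ^ 2 + 3 * z + 1) / (2 * z - ε)) * B := by ring
end

section
/- Let ε ≥ 0 and λ ≥ 1 be reals, and let a, b : E → ℝ≥0 and f, f* : E → ℝ≥0 on a finite set E satisfy Σ_e (a(e)f(e)² + b(e)f(e)) ≤ (1+ε)·Σ_e (a(e)f(e)f*(e) + b(e)f*(e)). Then ((4λ−1−ε)/(4λ))·Σ_e (a(e)f(e)² + b(e)f(e)) ≤ (1+ε)·λ·Σ_e (a(e)f*(e)² + b(e)f*(e)), provided 1+ε ≤ 4λ. -/
/-! Per resource, `x y ≤ x² / (4λ) + λ y²` (AM-GM) and `y ≤ λ y` turn the cross term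
`a f f* + b f*` into at most `a f² / (4λ) + λ (a f*² + b f*)`. Summing, the right-hand side of
the hypothesis is at most `(1 + ε) (C(f) / (4λ) + λ C(f*))`, where `C(h) = ∑ (a h² + b h)`,
and moving the `C(f)` part to the left gives the bound. -/

open Finset

lemma mul_mul_add_mul_le_of_one_le {lam a b x y : ℝ} (hlam : 1 ≤ lam) (ha : 0 ≤ a)
    (hb : 0 ≤ b) (hy : 0 ≤ y) :
    a * x * y + b * y ≤ a * x ^ 2 / (4 * lam) + lam * (a * y ^ 2 + b * y) := by
  have hlam0 : 0 < 4 * lam := by linarith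
  have amgm : 4 * lam * (x * y) ≤ x ^ 2 + 4 * lam ^ 2 * y ^ 2 := by
    nlinarith [sq_nonneg (x - 2 * lam * y)]
  have hquad : a * x * y ≤ a * x ^ 2 / (4 * lam) + lam * (a * y ^ 2) := by
    rw [div_add' _ _ _ hlam0.ne', le_div_iff₀ hlam0]
    nlinarith [mul_le_mul_of_nonneg_left amgm ha]
  have hlin : b * y ≤ lam * (b * y) := le_mul_of_one_le_left (mul_nonneg hb hy) hlam
  linarith

lemma sum_mul_mul_add_mul_le_of_one_le {E : Type*} [Fintype E] {lam : ℝ} (hlam : 1 ≤ lam) {a b f g : E → ℝ}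
    (ha : ∀ e, 0 ≤ a e) (hb : ∀ e, 0 ≤ b e) (hf : ∀ e, 0 ≤ f e) (hg : ∀ e, 0 ≤ g e) :
    ∑ e, (a e * f e * g e + b e * g e) ≤
      (∑ e, (a e * f e ^ 2 + b e * f e)) / (4 * lam) +
        lam * ∑ e, (a e * g e ^ 2 + b e * g e) := by
  rw [sum_div, mul_sum, ← sum_add_distrib]
  refine sum_le_sum fun e _ => (mul_mul_add_mul_le_of_one_le hlam (ha e) (hb e) (hg e)).trans ?_
  gcongr
  exact le_add_of_nonneg_right (mul_nonneg (hb e) (hf e))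

lemma div_mul_le_of_le_mul_of_le_div_add {ε lam S C T : ℝ} (hε : 0 ≤ 1 + ε) (hlam : 0 < lam)
    (hS : S ≤ (1 + ε) * C) (hC : C ≤ S / (4 * lam) + lam * T) :
    ((4 * lam - 1 - ε) / (4 * lam)) * S ≤ (1 + ε) * lam * T := by
  have hsplit : ((4 * lam - 1 - ε) / (4 * lam)) * S = S - (1 + ε) * (S / (4 * lam)) := by
    field_simp
    ring
  rw [hsplit]
  linarith [mul_le_mul_of_nonneg_left hC hε]

theorem stmt_8_general {E : Type*} [Fintype E] (ε lam : ℝ) (hε : 0 ≤ ε) (hlam : 1 ≤ lam)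
    (a b f g : E → ℝ) (ha : ∀ e, 0 ≤ a e) (hb : ∀ e, 0 ≤ b e)
    (hf : ∀ e, 0 ≤ f e) (hg : ∀ e, 0 ≤ g e)
    (h : ∑ e : E, (a e * f e ^ 2 + b e * f e) ≤
      (1 + ε) * ∑ e : E, (a e * f e * g e + b e * g e)) :
    ((4 * lam - 1 - ε) / (4 * lam)) * ∑ e : E, (a e * f e ^ 2 + b e * f e) ≤
      (1 + ε) * lam * ∑ e : E, (a e * g e ^ 2 + b e * g e) :=
  div_mul_le_of_le_mul_of_le_div_add (by linarith) (by linarith) h (sum_mul_mul_add_mul_le_of_one_le hlam ha hb hf hg)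

theorem stmt_8 {E : Type*} [Fintype E] (ε lam : ℝ) (hε : 0 ≤ ε) (hlam : 1 ≤ lam)
    (hεlam : 1 + ε ≤ 4 * lam)
    (a b f g : E → ℝ) (ha : ∀ e, 0 ≤ a e) (hb : ∀ e, 0 ≤ b e)
    (hf : ∀ e, 0 ≤ f e) (hg : ∀ e, 0 ≤ g e)
    (h : ∑ e : E, (a e * f e ^ 2 + b e * f e) ≤
      (1 + ε) * ∑ e : E, (a e * f e * g e + b e * g e)) :
    ((4 * lam - 1 - ε) / (4 * lam)) * ∑ e : E, (a e * f e ^ 2 + b e * f e) ≤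
      (1 + ε) * lam * ∑ e : E, (a e * g e ^ 2 + b e * g e) :=
  stmt_8_general ε lam hε hlam a b f g ha hb hf hg h
end

section
/- Let ε ≥ 0, z = ⌊1+ε⌋, and γ = ((z+1)² − (1+ε)(z+1)) / ((1+ε)z − z²). Then γ ≥ 0, (z+1)² + γz² = (1+ε)((z+1) + γz), and ((z+1)² + γz²)/(1+γ) = (1+ε)·z(z+1)/(2z−ε). -/
/-!
With `a = 1 + ε`, `x = z + 1`, `y = z`, the number `γ` is the weight that puts the two-point
distribution with masses `1` at `x` and `γ` at `y` in balance: `x² + γ y² = a (x + γ y)`.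
Writing `γ = N / D` with `N = x² - a x` and `D = a y - y²`, everything follows from the
factorisations `D + N = (x - y)(x + y - a)` and `x D + y N = x y (x - y)`, and `x - y = 1`.
`γ ≥ 0` because `z = ⌊1 + ε⌋₊` gives `ε < z`, so `N = (z + 1)(z - ε) ≥ 0`.
-/

namespace MomentWeight

noncomputable def momentWeight (a x y : ℝ) : ℝ := (x ^ 2 - a * x) / (a * y - y ^ 2)

variable {a x y : ℝ}

lemma momentWeight_nonneg (hax : a ≤ x) (hx : 0 ≤ x) (hD : 0 ≤ a * y - y ^ 2) :
    0 ≤ momentWeight a x y :=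
  div_nonneg (by nlinarith) hD

lemma momentWeight_mul (hD : a * y - y ^ 2 ≠ 0) :
    momentWeight a x y * (a * y - y ^ 2) = x ^ 2 - a * x :=
  div_mul_cancel₀ _ hD

lemma sq_add_momentWeight_mul_sq (hD : a * y - y ^ 2 ≠ 0) :
    x ^ 2 + momentWeight a x y * y ^ 2 = a * (x + momentWeight a x y * y) := by
  linear_combination -(momentWeight_mul hD)

lemma one_add_momentWeight (hD : a * y - y ^ 2 ≠ 0) :
    1 + momentWeight a x y = (x - y) * (x + y - a) / (a * y - y ^ 2) := by
  rw [eq_div_iff hD, add_mul, momentWeight_mul hD]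
  ring

lemma sq_add_momentWeight_mul_sq_div (hD : a * y - y ^ 2 ≠ 0) (hxy : x ≠ y)
    (hsum : x + y - a ≠ 0) :
    (x ^ 2 + momentWeight a x y * y ^ 2) / (1 + momentWeight a x y) =
      a * (x * y) / (x + y - a) := by
  have hxy' : x - y ≠ 0 := sub_ne_zero.mpr hxy
  rw [sq_add_momentWeight_mul_sq hD, one_add_momentWeight hD, div_div_eq_mul_div,
    div_eq_div_iff (mul_ne_zero hxy' hsum) hsum]
  linear_combination a * (x + y - a) * y * momentWeight_mul (x := x) hD

end MomentWeight

open MomentWeight in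
theorem stmt_11_general (ε : ℝ) (z : ℕ) (hz : z = ⌊1 + ε⌋₊)
    (hden : 0 < (1 + ε) * z - (z : ℝ) ^ 2) :
    0 ≤ (((z : ℝ) + 1) ^ 2 - (1 + ε) * (z + 1)) / ((1 + ε) * z - z ^ 2) ∧
    ((z : ℝ) + 1) ^ 2 +
        ((((z : ℝ) + 1) ^ 2 - (1 + ε) * (z + 1)) / ((1 + ε) * z - z ^ 2)) * z ^ 2 =
      (1 + ε) * (((z : ℝ) + 1) +
        ((((z : ℝ) + 1) ^ 2 - (1 + ε) * (z + 1)) / ((1 + ε) * z - z ^ 2)) * z) ∧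
    (((z : ℝ) + 1) ^ 2 +
        ((((z : ℝ) + 1) ^ 2 - (1 + ε) * (z + 1)) / ((1 + ε) * z - z ^ 2)) * z ^ 2) /
      (1 + (((z : ℝ) + 1) ^ 2 - (1 + ε) * (z + 1)) / ((1 + ε) * z - z ^ 2)) =
      (1 + ε) * ((z : ℝ) * (z + 1)) / (2 * z - ε) := by
  have hεz : ε < z := by
    have := Nat.lt_floor_add_one (1 + ε)
    rw [← hz] at this
    linarith
  have hz0 : (0 : ℝ) ≤ z := Nat.cast_nonneg z
  change 0 ≤ momentWeight (1 + ε) (z + 1) z ∧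
    _ + momentWeight (1 + ε) (z + 1) z * _ = _ * (_ + momentWeight (1 + ε) (z + 1) z * _) ∧
    (_ + momentWeight (1 + ε) (z + 1) z * _) / (1 + momentWeight (1 + ε) (z + 1) z) = _
  refine ⟨momentWeight_nonneg (by linarith) (by linarith) hden.le,
    sq_add_momentWeight_mul_sq hden.ne', ?_⟩
  rw [sq_add_momentWeight_mul_sq_div hden.ne' (by linarith) (by linarith)]
  ring

theorem stmt_11 (ε : ℝ) (hε : 0 ≤ ε) (z : ℕ) (hz : z = ⌊1 + ε⌋₊)
    (hden : 0 < (1 + ε) * z - (z : ℝ) ^ 2) :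
    0 ≤ (((z : ℝ) + 1) ^ 2 - (1 + ε) * (z + 1)) / ((1 + ε) * z - z ^ 2) ∧
    ((z : ℝ) + 1) ^ 2 +
        ((((z : ℝ) + 1) ^ 2 - (1 + ε) * (z + 1)) / ((1 + ε) * z - z ^ 2)) * z ^ 2 =
      (1 + ε) * (((z : ℝ) + 1) +
        ((((z : ℝ) + 1) ^ 2 - (1 + ε) * (z + 1)) / ((1 + ε) * z - z ^ 2)) * z) ∧
    (((z : ℝ) + 1) ^ 2 +
        ((((z : ℝ) + 1) ^ 2 - (1 + ε) * (z + 1)) / ((1 + ε) * z - z ^ 2)) * z ^ 2) /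
      (1 + (((z : ℝ) + 1) ^ 2 - (1 + ε) * (z + 1)) / ((1 + ε) * z - z ^ 2)) =
      (1 + ε) * ((z : ℝ) * (z + 1)) / (2 * z - ε) :=
  stmt_11_general ε z hz hden
end

section
/- Let ε ∈ [0,1] and suppose nonnegative-integer-valued functions n, m on a finite set E satisfy both (i) Σ_e n(e)² + ((1−ε)/(1+ε))Σ_e n(e) ≤ Σ_e m(e)² + ((1−ε)/(1+ε))Σ_e m(e), and (ii) Σ_e (n(e)² − (ε/(1+ε))n(e)) ≤ Σ_e m(e)(n(e) + 1/(1+ε)). Then Σ_e n(e)² ≤ ((√3+1)/(√3+ε))·Σ_e m(e)². -/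
/-!
For natural numbers `a, b` the quadratic form
`(2 - √3) a² + (2 + √3) b² - 2ab + √3 a - (2 + √3) b` is nonnegative; summed over `E` with
`a = n e`, `b = m e` it gives a third linear inequality between the aggregates `∑ n²`, `∑ m²`,
`∑ n`, `∑ m`, `∑ m n`. A nonnegative combination of the three eliminates `∑ n`, `∑ m` and `∑ m n`
and leaves `(√3 + ε) ∑ n² ≤ (√3 + 1) ∑ m²`.
-/

open Finset

lemma natCast_mul_natCast_sub_one_nonneg (x : ℕ) : 0 ≤ (x : ℝ) * (x - 1) := by
  rcases x.eq_zero_or_pos with rfl | hx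
  · simp
  · exact mul_nonneg x.cast_nonneg (sub_nonneg.2 (Nat.one_le_cast.2 hx))

lemma sqrt_three_mixed_quadratic_nonneg (a b : ℕ) :
    0 ≤ (2 - √3) * (a : ℝ) ^ 2 + (2 + √3) * (b : ℝ) ^ 2 - 2 * ((a : ℝ) * b)
      + √3 * a - (2 + √3) * b := by
  have hs : √3 ^ 2 = 3 := Real.sq_sqrt (by norm_num)
  rcases le_or_gt a b with hab | hab
  · obtain ⟨k, rfl⟩ := Nat.exists_eq_add_of_le hab
    have hform : (2 - √3) * (a : ℝ) ^ 2 + (2 + √3) * ((a + k : ℕ) : ℝ) ^ 2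
        - 2 * ((a : ℝ) * (a + k : ℕ)) + √3 * a - (2 + √3) * (a + k : ℕ)
        = 2 * (a * (a - 1)) + (2 + 2 * √3) * (a * k) + (2 + √3) * (k * (k - 1)) := by
      push_cast; ring
    rw [hform]
    have := natCast_mul_natCast_sub_one_nonneg a
    have := natCast_mul_natCast_sub_one_nonneg k
    positivity
  · obtain ⟨d, rfl⟩ := Nat.exists_eq_add_of_lt hab
    -- completing the square in `b`; this is where `√3 ^ 2 = 3` enters
    have hform : (2 - √3) * ((b + d + 1 : ℕ) : ℝ) ^ 2 + (2 + √3) * (b : ℝ) ^ 2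
        - 2 * (((b + d + 1 : ℕ) : ℝ) * b) + √3 * (b + d + 1 : ℕ) - (2 + √3) * b
        = (2 * b - 1 - (√3 - 1) * (d + 1)) ^ 2 / 2 + d + 1 / 2 := by
      push_cast; linear_combination (-(d + 1 : ℝ) ^ 2 / 2) * hs
    rw [hform]
    positivity

lemma le_div_mul_of_potential_ineqs {ε s N₁ N₂ M₁ M₂ X : ℝ} (hε₀ : 0 ≤ ε) (hε₁ : ε ≤ 1)
    (hs : 0 < s)
    (hi : N₂ + (1 - ε) / (1 + ε) * N₁ ≤ M₂ + (1 - ε) / (1 + ε) * M₁)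
    (hii : N₂ - ε / (1 + ε) * N₁ ≤ X + 1 / (1 + ε) * M₁)
    (hG : 0 ≤ (2 - s) * N₂ + (2 + s) * M₂ - 2 * X + s * N₁ - (2 + s) * M₁) :
    N₂ ≤ (s + 1) / (s + ε) * M₂ := by
  have hu : 0 < 1 + ε := by linarith
  have hi' : (1 + ε) * N₂ + (1 - ε) * N₁ ≤ (1 + ε) * M₂ + (1 - ε) * M₁ := by
    have := mul_le_mul_of_nonneg_left hi hu.le
    field_simp at this
    linarith
  have hii' : (1 + ε) * N₂ - ε * N₁ ≤ (1 + ε) * X + M₁ := by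
    have := mul_le_mul_of_nonneg_left hii hu.le
    field_simp at this
    linarith
  -- the weights are chosen so that the `N₁`, `M₁` and `X` terms cancel
  have h₁ := mul_nonneg (by positivity : 0 ≤ ε * s + 2 * ε + s) (sub_nonneg.2 hi')
  have h₂ := mul_nonneg (sub_nonneg.2 hε₁) (sub_nonneg.2 hii')
  have h₃ := mul_nonneg (mul_nonneg hu.le (sub_nonneg.2 hε₁)) hG
  have key : (1 + ε) * ((s + ε) * N₂) ≤ (1 + ε) * ((s + 1) * M₂) := by linarith
  rw [div_mul_eq_mul_div, le_div_iff₀ (by positivity)]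
  linarith [le_of_mul_le_mul_left key hu]

theorem stmt_14 {E : Type*} [Fintype E] (ε : ℝ) (h0 : 0 ≤ ε) (h1 : ε ≤ 1)
    (n m : E → ℕ)
    (hi : ∑ e : E, ((n e : ℝ)) ^ 2 + ((1 - ε) / (1 + ε)) * ∑ e : E, (n e : ℝ) ≤
      ∑ e : E, ((m e : ℝ)) ^ 2 + ((1 - ε) / (1 + ε)) * ∑ e : E, (m e : ℝ))
    (hii : ∑ e : E, (((n e : ℝ)) ^ 2 - (ε / (1 + ε)) * n e) ≤
      ∑ e : E, (m e : ℝ) * ((n e : ℝ) + 1 / (1 + ε))) :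
    ∑ e : E, ((n e : ℝ)) ^ 2 ≤
      ((Real.sqrt 3 + 1) / (Real.sqrt 3 + ε)) * ∑ e : E, ((m e : ℝ)) ^ 2 := by
  have hG := sum_nonneg fun e (_ : e ∈ univ) => sqrt_three_mixed_quadratic_nonneg (n e) (m e)
  refine le_div_mul_of_potential_ineqs (X := ∑ e, (m e : ℝ) * n e) h0 h1 (by positivity) hi ?_ ?_
  · simpa only [sum_sub_distrib, mul_add, sum_add_distrib, mul_comm _ (1 / (1 + ε)), ← mul_sum]
      using hii
  · simpa only [sum_sub_distrib, sum_add_distrib, ← mul_sum, mul_comm (n _ : ℝ)] using hG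
end

section
/- Consider a congestion game with players N, strategies S_i ⊆ 2^E, linear latencies l_e(x) = a_e·x + b_e with a_e, b_e ≥ 0, and define Φ^ε(A) = (1/2)Σ_e (a_e·n_e(A) + b_e)·n_e(A) + (1/2)·((1−ε)/(1+ε))·Σ_e (a_e + b_e)·n_e(A), where n_e(A) is the number of players using e in A. If profile A is a local minimum of Φ^ε (i.e., Φ^ε(P_i, A_{−i}) ≥ Φ^ε(A) for every player i and every P_i ∈ S_i), then A is an ε-Nash equilibrium: c_i(A) ≤ (1+ε)·c_i(P_i, A_{−i}) for all i and all P_i ∈ S_i, where c_i(A) = Σ_{e ∈ A_i} (a_e·n_e(A) + b_e). -/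
/-- Number of players using facility `e` in profile `A`. -/
def nCount {N E : Type*} [Fintype N] [DecidableEq E] (A : N → Finset E) (e : E) : ℕ :=
  (Finset.univ.filter fun i => e ∈ A i).card

/-- Cost of player `i` in profile `A` with linear latencies. -/
noncomputable def playerCost {N E : Type*} [Fintype N] [DecidableEq E]
    (a b : E → ℝ) (A : N → Finset E) (i : N) : ℝ :=
  ∑ e ∈ A i, (a e * (nCount A e : ℝ) + b e)

/-- The ε-potential function. -/
noncomputable def epsPotential {N E : Type*} [Fintype N] [Fintype E] [DecidableEq E]
    (ε : ℝ) (a b : E → ℝ) (A : N → Finset E) : ℝ :=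
  (1 / 2) * ∑ e : E, (a e * (nCount A e : ℝ) + b e) * (nCount A e : ℝ) +
    (1 / 2) * ((1 - ε) / (1 + ε)) * ∑ e : E, (a e + b e) * (nCount A e : ℝ)

/-!
`Φ^ε` is Rosenthal's potential for the shifted latencies `ℓ_e(x) - ε/(1+ε) · ℓ_e(1)`, so a unilateral
deviation changes `Φ^ε` by exactly the change of the deviator's shifted cost. At a local minimum,
the shifted cost of `A_i` is therefore at most that of `P`, which is at most `c_i(P, A_{-i})`
since latencies are nonnegative; and `ℓ_e(1) ≤ ℓ_e(n_e(A))` on `A_i` gives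
`(1 - ε/(1+ε)) · c_i(A) ≤ c_i(P, A_{-i})`, i.e. `c_i(A) ≤ (1+ε) · c_i(P, A_{-i})`.
-/

open Finset Function

section Congestion

variable {N E : Type*} [Fintype N] [DecidableEq N] [DecidableEq E]

lemma nCount_update_add (A : N → Finset E) (i : N) (P : Finset E) (e : E) :
    nCount (update A i P) e + (if e ∈ A i then 1 else 0) =
      nCount A e + (if e ∈ P then 1 else 0) := by
  have hothers : ∑ j ∈ univ.erase i, (if e ∈ update A i P j then 1 else 0) =
      ∑ j ∈ univ.erase i, (if e ∈ A j then 1 else 0) :=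
    sum_congr rfl fun j hj => by rw [update_of_ne (ne_of_mem_erase hj)]
  simp only [nCount, card_filter]
  rw [← add_sum_erase _ _ (mem_univ i), ← add_sum_erase _ _ (mem_univ i), hothers, update_self]
  ring

/-- Rosenthal's exact-potential identity, for any potential with per-facility increments `f e`. -/
lemma sum_nCount_update_sub [Fintype E] {F f : E → ℕ → ℝ}
    (hF : ∀ e n, F e (n + 1) = F e n + f e (n + 1)) (A : N → Finset E) (i : N) (P : Finset E) :
    ∑ e, F e (nCount (update A i P) e) - ∑ e, F e (nCount A e) =
      ∑ e ∈ P, f e (nCount (update A i P) e) - ∑ e ∈ A i, f e (nCount A e) := by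
  rw [← Fintype.sum_ite_mem P, ← Fintype.sum_ite_mem (A i), ← sum_sub_distrib, ← sum_sub_distrib]
  refine sum_congr rfl fun e _ => ?_
  have hcount := nCount_update_add A i P e
  generalize nCount (update A i P) e = n' at hcount ⊢
  generalize nCount A e = n at hcount ⊢
  split_ifs at hcount ⊢
  · obtain rfl : n' = n := by omega
    ring
  · obtain rfl : n' = n + 1 := by omega
    rw [hF]; ring
  · obtain rfl : n = n' + 1 := by omega
    rw [hF]; ring
  · obtain rfl : n' = n := by omega
    ring

lemma epsPotential_update_sub [Fintype E] {ε : ℝ} (hε : 1 + ε ≠ 0) (a b : E → ℝ)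
    (A : N → Finset E) (i : N) (P : Finset E) :
    epsPotential ε a b (update A i P) - epsPotential ε a b A =
      (playerCost a b (update A i P) i - ε / (1 + ε) * ∑ e ∈ P, (a e + b e)) -
        (playerCost a b A i - ε / (1 + ε) * ∑ e ∈ A i, (a e + b e)) := by
  set F : E → ℕ → ℝ := fun e n =>
    1 / 2 * ((a e * n + b e) * n) + 1 / 2 * ((1 - ε) / (1 + ε)) * ((a e + b e) * n)
  have hpotential : ∀ A' : N → Finset E, epsPotential ε a b A' = ∑ e, F e (nCount A' e) :=
    fun A' => by rw [epsPotential, mul_sum, mul_sum, ← sum_add_distrib]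
  have hcost : ∀ (s : Finset E) (n : E → ℕ), ∑ e ∈ s, (a e * n e + b e - ε / (1 + ε) * (a e + b e))
      = ∑ e ∈ s, (a e * n e + b e) - ε / (1 + ε) * ∑ e ∈ s, (a e + b e) :=
    fun s n => by rw [sum_sub_distrib, mul_sum]
  rw [hpotential, hpotential, sum_nCount_update_sub
    (f := fun e n => a e * n + b e - ε / (1 + ε) * (a e + b e))
    (fun e n => by simp only [F]; push_cast; field_simp; ring), hcost, hcost, playerCost, playerCost,
    update_self]

omit [DecidableEq N] in
lemma sum_latency_one_le_playerCost {a : E → ℝ} (ha : ∀ e, 0 ≤ a e) (b : E → ℝ)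
    (A : N → Finset E) (i : N) : ∑ e ∈ A i, (a e + b e) ≤ playerCost a b A i := by
  refine sum_le_sum fun e he => ?_
  have hload : (1 : ℝ) ≤ nCount A e := by
    exact_mod_cast card_pos.mpr ⟨i, mem_filter.mpr ⟨mem_univ i, he⟩⟩
  linarith [le_mul_of_one_le_right (ha e) hload]

end Congestion

theorem stmt_15_general {N E : Type*} [Fintype N] [DecidableEq N] [Fintype E] [DecidableEq E]
    (ε : ℝ) (hε : 0 ≤ ε) (a b : E → ℝ) (ha : ∀ e, 0 ≤ a e) (hb : ∀ e, 0 ≤ b e)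
    (S : N → Finset (Finset E)) (A : N → Finset E)
    (hmin : ∀ i : N, ∀ P ∈ S i,
      epsPotential ε a b A ≤ epsPotential ε a b (Function.update A i P)) :
    ∀ i : N, ∀ P ∈ S i,
      playerCost a b A i ≤ (1 + ε) * playerCost a b (Function.update A i P) i := by
  intro i P hP
  have hpos : 0 < 1 + ε := by linarith
  have hdescent := sub_nonneg.mpr (hmin i P hP)
  rw [epsPotential_update_sub hpos.ne' a b A i P] at hdescent
  have hstay := sum_latency_one_le_playerCost ha b A i
  have hmove : 0 ≤ ∑ e ∈ P, (a e + b e) := sum_nonneg fun e _ => add_nonneg (ha e) (hb e)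
  have hc : 0 ≤ ε / (1 + ε) := by positivity
  calc playerCost a b A i = (1 + ε) * ((1 - ε / (1 + ε)) * playerCost a b A i) := by
        field_simp; ring
    _ ≤ (1 + ε) * playerCost a b (update A i P) i := by
        gcongr
        linarith [mul_le_mul_of_nonneg_left hstay hc, mul_nonneg hc hmove]

theorem stmt_15 {N E : Type*} [Fintype N] [DecidableEq N] [Fintype E] [DecidableEq E]
    (ε : ℝ) (hε : 0 ≤ ε) (a b : E → ℝ) (ha : ∀ e, 0 ≤ a e) (hb : ∀ e, 0 ≤ b e)
    (S : N → Finset (Finset E)) (A : N → Finset E) (hA : ∀ i, A i ∈ S i)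
    (hmin : ∀ i : N, ∀ P ∈ S i,
      epsPotential ε a b A ≤ epsPotential ε a b (Function.update A i P)) :
    ∀ i : N, ∀ P ∈ S i,
      playerCost a b A i ≤ (1 + ε) * playerCost a b (Function.update A i P) i :=
  stmt_15_general ε hε a b ha hb S A hmin
end

section
/- In the setting of Theorem potential-atomic, the change in the ε-potential when player i switches from A_i to P_i satisfies: Φ^ε(P_i, A_{−i}) − Φ^ε(A) = Σ_{e ∈ P_i}(a_e·n_e(A) + (a_e+b_e)/(1+ε)) − Σ_{e ∈ P_i ∩ A_i} a_e − Σ_{e ∈ A_i}(a_e·n_e(A) + (−a_e·ε + b_e)/(1+ε)). -/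
lemma nCount_update_real {N E : Type*} [Fintype N] [DecidableEq N] [DecidableEq E]
    (A : N → Finset E) (i : N) (P : Finset E) (e : E) :
    ((nCount (Function.update A i P) e : ℝ)) =
      (nCount A e : ℝ) + (if e ∈ P then 1 else 0) - (if e ∈ A i then 1 else 0) := by
  have hsum : ∀ (B : N → Finset E), (nCount B e : ℝ) = ∑ j : N, if e ∈ B j then (1:ℝ) else 0 := by
    intro B
    rw [nCount, Finset.card_filter]
    push_cast
    rfl
  rw [hsum, hsum]
  have hfun : (fun j => if e ∈ Function.update A i P j then (1:ℝ) else 0) =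
      Function.update (fun j => if e ∈ A j then (1:ℝ) else 0) i (if e ∈ P then 1 else 0) := by
    funext j
    by_cases h : j = i
    · subst h; simp
    · simp [Function.update_of_ne h]
  rw [hfun, Finset.sum_update_of_mem (Finset.mem_univ i)]
  have : ∑ j : N, (if e ∈ A j then (1:ℝ) else 0) =
      (if e ∈ A i then (1:ℝ) else 0) + ∑ j ∈ Finset.univ \ {i}, (if e ∈ A j then (1:ℝ) else 0) := by
    rw [← Finset.sum_update_of_mem (Finset.mem_univ i)]
    congr 1
    funext j
    by_cases h : j = i
    · subst h; simp
    · simp [Function.update_of_ne h]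
  rw [this]
  ring

theorem stmt_16 {N E : Type*} [Fintype N] [DecidableEq N] [Fintype E] [DecidableEq E]
    (ε : ℝ) (hε : 0 ≤ ε) (a b : E → ℝ) (ha : ∀ e, 0 ≤ a e) (hb : ∀ e, 0 ≤ b e)
    (A : N → Finset E) (i : N) (P : Finset E) :
    epsPotential ε a b (Function.update A i P) - epsPotential ε a b A =
      (∑ e ∈ P, (a e * (nCount A e : ℝ) + (a e + b e) / (1 + ε)))
        - (∑ e ∈ P ∩ A i, a e)
        - ∑ e ∈ A i, (a e * (nCount A e : ℝ) + (-(a e) * ε + b e) / (1 + ε)) := by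
  have h1 : (1:ℝ) + ε ≠ 0 := by positivity
  have hP : ∀ (g : E → ℝ) (s : Finset E), ∑ e ∈ s, g e = ∑ e : E, if e ∈ s then g e else 0 := by
    intro g s
    rw [← Finset.sum_filter]
    congr 1
    ext x
    simp
  rw [hP _ P, hP _ (P ∩ A i), hP _ (A i)]
  simp only [epsPotential, nCount_update_real, Finset.mul_sum, ← Finset.sum_add_distrib,
    ← Finset.sum_sub_distrib]
  refine Finset.sum_congr rfl fun e _ => ?_
  by_cases hp : e ∈ P <;> by_cases hq : e ∈ A i <;>
    simp [hp, hq, Finset.mem_inter] <;> field_simp <;> ring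
end

section
/- Let E be a finite set, a, b : E → ℝ≥0, ε ∈ [0,1], and f, f* : E → ℝ≥0 satisfying Σ_e (a(e)f(e)² + b(e)f(e)/(1+ε)) ≤ Σ_e (a(e)f(e)f*(e) + b(e)f*(e)/(1+ε)). Then Σ_e (a(e)f(e)² + b(e)f(e)) ≤ (4/((3−ε)(1+ε)))·Σ_e (a(e)f*(e)² + b(e)f*(e)). -/
/-!
Write `D = 1 + ε`. The pointwise AM-GM bound `f g ≤ (D/4) f² + g²/D`, weighted by `a` and summed,
turns the variational inequality into `((3 - ε)/4) Σ a f² + Σ b f / D ≤ (Σ a g² + Σ b g) / D`.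
Since `1/D ≥ (3 - ε)/4` (equivalently `(1 - ε)² ≥ 0`), the left side dominates
`((3 - ε)/4) Σ (a f² + b f)`, which gives the bound `4 / ((3 - ε) D)`.
-/

open Finset

lemma mul_le_div_four_mul_sq_add_sq_div {c : ℝ} (hc : 0 < c) (x y : ℝ) :
    x * y ≤ c / 4 * x ^ 2 + y ^ 2 / c := by
  have hsq : c / 4 * x ^ 2 + y ^ 2 / c - x * y = (c * x - 2 * y) ^ 2 / (4 * c) := by
    field_simp
    ring
  have : 0 ≤ (c * x - 2 * y) ^ 2 / (4 * c) := by positivity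
  linarith

lemma sum_mul_mul_le {ι : Type*} (s : Finset ι) {c : ℝ} (hc : 0 < c) {a : ι → ℝ}
    (ha : ∀ i, 0 ≤ a i) (f g : ι → ℝ) :
    ∑ i ∈ s, a i * f i * g i ≤ c / 4 * ∑ i ∈ s, a i * f i ^ 2 + (∑ i ∈ s, a i * g i ^ 2) / c := by
  rw [mul_sum, sum_div, ← sum_add_distrib]
  refine sum_le_sum fun i _ => ?_
  have := mul_le_mul_of_nonneg_left (mul_le_div_four_mul_sq_add_sq_div hc (f i) (g i)) (ha i)
  linear_combination this

lemma three_sub_div_four_le_one_div_one_add {ε : ℝ} (hε : -1 < ε) :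
    (3 - ε) / 4 ≤ 1 / (1 + ε) := by
  rw [le_div_iff₀ (by linarith)]
  nlinarith [sq_nonneg (1 - ε)]

theorem stmt_19_general {E : Type*} [Fintype E] (ε : ℝ) (h0 : 0 ≤ ε) (h1 : ε ≤ 1)
    (a b f g : E → ℝ) (ha : ∀ e, 0 ≤ a e) (hb : ∀ e, 0 ≤ b e)
    (hf : ∀ e, 0 ≤ f e)
    (h : ∑ e : E, (a e * f e ^ 2 + b e * f e / (1 + ε)) ≤
      ∑ e : E, (a e * f e * g e + b e * g e / (1 + ε))) :
    ∑ e : E, (a e * f e ^ 2 + b e * f e) ≤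
      (4 / ((3 - ε) * (1 + ε))) * ∑ e : E, (a e * g e ^ 2 + b e * g e) := by
  have hD : 0 < 1 + ε := by linarith
  have hK : 0 < 3 - ε := by linarith
  simp only [sum_add_distrib, ← sum_div] at h
  have hcross := sum_mul_mul_le univ hD ha f g
  have hbf : 0 ≤ ∑ e : E, b e * f e := sum_nonneg fun e _ => mul_nonneg (hb e) (hf e)
  have hinv := mul_le_mul_of_nonneg_right
    (three_sub_div_four_le_one_div_one_add (show -1 < ε by linarith)) hbf
  have hscaled : (3 - ε) / 4 * ∑ e : E, (a e * f e ^ 2 + b e * f e) ≤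
      (∑ e : E, (a e * g e ^ 2 + b e * g e)) / (1 + ε) := by
    rw [sum_add_distrib, sum_add_distrib, add_div]
    linear_combination h + hcross + hinv
  calc ∑ e : E, (a e * f e ^ 2 + b e * f e)
      = 4 / (3 - ε) * ((3 - ε) / 4 * ∑ e : E, (a e * f e ^ 2 + b e * f e)) := by
        field_simp
    _ ≤ 4 / (3 - ε) * ((∑ e : E, (a e * g e ^ 2 + b e * g e)) / (1 + ε)) := by gcongr
    _ = 4 / ((3 - ε) * (1 + ε)) * ∑ e : E, (a e * g e ^ 2 + b e * g e) := by
        field_simp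

theorem stmt_19 {E : Type*} [Fintype E] (ε : ℝ) (h0 : 0 ≤ ε) (h1 : ε ≤ 1)
    (a b f g : E → ℝ) (ha : ∀ e, 0 ≤ a e) (hb : ∀ e, 0 ≤ b e)
    (hf : ∀ e, 0 ≤ f e) (hg : ∀ e, 0 ≤ g e)
    (h : ∑ e : E, (a e * f e ^ 2 + b e * f e / (1 + ε)) ≤
      ∑ e : E, (a e * f e * g e + b e * g e / (1 + ε))) :
    ∑ e : E, (a e * f e ^ 2 + b e * f e) ≤
      (4 / ((3 - ε) * (1 + ε))) * ∑ e : E, (a e * g e ^ 2 + b e * g e) :=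
  stmt_19_general ε h0 h1 a b f g ha hb hf h
end
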